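/- arXiv:2310.11136 — 3 statements merged into one kernel-verified Lean document; each statement's English description precedes it below -/
import Mathlib

section
/- Termination of AUnif: there is no infinite sequence C0 ⟹ C1 ⟹ ⋯ of AUnif rule applications starting from a configuration; moreover, for every configuration C, the set AUnif(C) of final configurations reachable from C by exhaustive rule application is finite. -/
/-! Weigh a configuration by the total size of the terms in its unsolved AUEs plus the number
of its solved AUEs. Decompose and the four expansion rules replace an unsolved AUE by strictly
smaller ones, Solve trades an unsolved AUE (of weight at least 2) for one store entry, and Merge
deletes a store entry, so every rule decreases the weight and no derivation is infinite. Fresh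
variables are chosen canonically, so a configuration has only finitely many successors, one
per rule and redex; by well-founded induction on the weight the reachable configurations, and
in particular the final ones, form a finite set. -/

namespace AbsAU

/-- First-order terms over a set `F` of function symbols, with variables drawn
from the countably infinite set `ℕ`. -/
inductive Tm (F : Type) : Type where
  | var : ℕ → Tm F
  | app : F → List (Tm F) → Tm F

namespace Tm

variable {F : Type}

/-- Application of a substitution (given as a total map on variables) to a term. -/
def subst (σ : ℕ → Tm F) : Tm F → Tm F
  | var x => σ x
  | app f ts => app f (ts.attach.map fun t => subst σ t.1)
decreasing_by
  have := List.sizeOf_lt_of_mem t.2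
  simp only [Tm.app.sizeOf_spec]
  omega

/-- The head of a term: a variable or a function symbol. -/
def head : Tm F → ℕ ⊕ F
  | var x => Sum.inl x
  | app f _ => Sum.inr f

end Tm

/-- `VarIn x t` holds iff the variable `x` occurs in the term `t`. -/
inductive VarIn {F : Type} : ℕ → Tm F → Prop where
  | var (x : ℕ) : VarIn x (.var x)
  | app {x : ℕ} {t : Tm F} (f : F) {ts : List (Tm F)} :
      t ∈ ts → VarIn x t → VarIn x (.app f ts)

/-- `SymOcc f t` holds iff the function symbol `f` occurs in the term `t`. -/
inductive SymOcc {F : Type} (f : F) : Tm F → Prop where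
  | head (ts : List (Tm F)) : SymOcc f (.app f ts)
  | arg {t : Tm F} (g : F) {ts : List (Tm F)} :
      t ∈ ts → SymOcc f t → SymOcc f (.app g ts)

/-- Signature data: an arity for every symbol and the distinguished wild card
constant `⋆`. -/
structure AbsSig (F : Type) where
  arity : F → ℕ
  star : F
  star_arity : arity star = 0

/-- Arity-respecting (well-formed) terms. -/
inductive WFT {F : Type} (Sg : AbsSig F) : Tm F → Prop where
  | var (x : ℕ) : WFT Sg (.var x)
  | app {f : F} {ts : List (Tm F)} :
      ts.length = Sg.arity f → (∀ t ∈ ts, WFT Sg t) → WFT Sg (.app f ts)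

/-- An absorption theory: finitely many pairs `(f, ε_f)` of a binary symbol
together with its absorption constant, all chosen symbols pairwise distinct and
distinct from the wild card. -/
structure AbsTh {F : Type} (Sg : AbsSig F) where
  pairs : Set (F × F)
  finite : pairs.Finite
  binary : ∀ p ∈ pairs, Sg.arity p.1 = 2
  constZ : ∀ p ∈ pairs, Sg.arity p.2 = 0
  distinct : ∀ p ∈ pairs, ∀ q ∈ pairs, p ≠ q →
      p.1 ≠ q.1 ∧ p.1 ≠ q.2 ∧ p.2 ≠ q.1 ∧ p.2 ≠ q.2
  ne : ∀ p ∈ pairs, p.1 ≠ p.2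
  star_ne : ∀ p ∈ pairs, Sg.star ≠ p.1 ∧ Sg.star ≠ p.2

variable {F : Type}

/-- `≈_Abs` : the least congruence on terms containing all substitution
instances of the absorption axioms `f(ε_f, x) ≈ ε_f` and `f(x, ε_f) ≈ ε_f`. -/
inductive AbsEq {Sg : AbsSig F} (Th : AbsTh Sg) : Tm F → Tm F → Prop where
  | absL {f e : F} (t : Tm F) : (f, e) ∈ Th.pairs →
      AbsEq Th (.app f [.app e [], t]) (.app e [])
  | absR {f e : F} (t : Tm F) : (f, e) ∈ Th.pairs →
      AbsEq Th (.app f [t, .app e []]) (.app e [])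
  | refl (t : Tm F) : AbsEq Th t t
  | symm {s t : Tm F} : AbsEq Th s t → AbsEq Th t s
  | trans {s t u : Tm F} : AbsEq Th s t → AbsEq Th t u → AbsEq Th s u
  | congr (f : F) {ss ts : List (Tm F)} :
      List.Forall₂ (AbsEq Th) ss ts → AbsEq Th (.app f ss) (.app f ts)

/-- The domain of a substitution. -/
def Dom (σ : ℕ → Tm F) : Set ℕ := {x | σ x ≠ .var x}

/-- A substitution proper has a finite domain. -/
def FinDom (σ : ℕ → Tm F) : Prop := (Dom σ).Finite

/-- The variables occurring in the range of a substitution. -/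
def Rvar (σ : ℕ → Tm F) : Set ℕ := {y | ∃ x ∈ Dom σ, VarIn y (σ x)}

/-- `r ≲_Abs s` : `r` is more general than `s` modulo the absorption theory. -/
def MoreGen {Sg : AbsSig F} (Th : AbsTh Sg) (r s : Tm F) : Prop :=
  ∃ σ : ℕ → Tm F, FinDom σ ∧ AbsEq Th (r.subst σ) s

/-- `r` is an `Abs`-generalization of `s` and `t`. -/
def Gen {Sg : AbsSig F} (Th : AbsTh Sg) (r s t : Tm F) : Prop :=
  MoreGen Th r s ∧ MoreGen Th r t

/-- The set of all `Abs`-generalizations of `s` and `t`. -/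
def GAbs {Sg : AbsSig F} (Th : AbsTh Sg) (s t : Tm F) : Set (Tm F) :=
  {r | Gen Th r s t}

/-- `M` is a minimal complete set of `Abs`-generalizations of `s` and `t`. -/
def IsMCSG {Sg : AbsSig F} (Th : AbsTh Sg) (M : Set (Tm F)) (s t : Tm F) : Prop :=
  M ⊆ GAbs Th s t ∧
  (∀ r ∈ GAbs Th s t, ∃ r' ∈ M, MoreGen Th r r') ∧
  (∀ r ∈ M, ∀ r' ∈ M, MoreGen Th r r' → r = r')

/-- `Abs`-normal forms: no absorption constant occurs as an argument of its
absorption symbol. -/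
inductive NF {Sg : AbsSig F} (Th : AbsTh Sg) : Tm F → Prop where
  | var (x : ℕ) : NF Th (.var x)
  | app {f : F} {ts : List (Tm F)} :
      (∀ t ∈ ts, NF Th t) →
      (∀ e : F, (f, e) ∈ Th.pairs → Tm.app e [] ∉ ts) →
      NF Th (.app f ts)

/-- An anti-unification equation (AUE) `lhs ≜_lab rhs`. -/
structure AUE (F : Type) where
  lhs : Tm F
  lab : ℕ
  rhs : Tm F

/-- The labels of a set of AUEs. -/
def labels (W : Set (AUE F)) : Set ℕ := AUE.lab '' W

/-- A set of AUEs is valid if its labels are pairwise distinct. -/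
def ValidAUEs (W : Set (AUE F)) : Prop :=
  ∀ a ∈ W, ∀ b ∈ W, a.lab = b.lab → a = b

/-- The wild card, as a term. -/
def starTm (Sg : AbsSig F) : Tm F := .app Sg.star []

/-- A wild AUE has the wild card on one of its sides. -/
def WildAUE (Sg : AbsSig F) (a : AUE F) : Prop :=
  a.lhs = starTm Sg ∨ a.rhs = starTm Sg

/-- The heads of `s` and `t` form a related absorption pair. -/
def RelatedAbs {Sg : AbsSig F} (Th : AbsTh Sg) (s t : Tm F) : Prop :=
  ∃ f e : F, (f, e) ∈ Th.pairs ∧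
    ((s.head = Sum.inr f ∧ t.head = Sum.inr e) ∨
     (s.head = Sum.inr e ∧ t.head = Sum.inr f))

/-- A solved AUE: distinct heads, no related absorption symbols, not wild. -/
def SolvedAUE {Sg : AbsSig F} (Th : AbsTh Sg) (a : AUE F) : Prop :=
  a.lhs.head ≠ a.rhs.head ∧ ¬ RelatedAbs Th a.lhs a.rhs ∧ ¬ WildAUE Sg a

/-- A proper object term appearing in an AUE of a configuration: in
`Abs`-normal form, arity-respecting, ground, and wild-card free. -/
def GoodTm {Sg : AbsSig F} (Th : AbsTh Sg) (t : Tm F) : Prop :=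
  NF Th t ∧ WFT Sg t ∧ (∀ x : ℕ, ¬ VarIn x t) ∧ ¬ SymOcc Sg.star t

/-- A configuration `⟨A; S; T; θ⟩`. -/
structure Config (F : Type) where
  A : Set (AUE F)
  S : Set (AUE F)
  T : Set (AUE F)
  θ : ℕ → Tm F

/-- The defining properties of configurations: `A`, `S`, `T` are (finite) valid
sets of unsolved, solved, resp. wild AUEs over object terms in `Abs`-normal
form, `θ` is a substitution, (i) the labels of `A`, `S`, `T` and the domain of
`θ` are pairwise disjoint, and (ii) the variables occurring in the range of `θ`
are exactly the labels of `A`, `S` and `T`. -/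
structure IsConfig {Sg : AbsSig F} (Th : AbsTh Sg) (C : Config F) : Prop where
  finA : C.A.Finite
  finS : C.S.Finite
  finT : C.T.Finite
  validA : ValidAUEs C.A
  validS : ValidAUEs C.S
  validT : ValidAUEs C.T
  goodA : ∀ a ∈ C.A, GoodTm Th a.lhs ∧ GoodTm Th a.rhs
  goodS : ∀ a ∈ C.S, GoodTm Th a.lhs ∧ GoodTm Th a.rhs
  solvedS : ∀ a ∈ C.S, SolvedAUE Th a
  wildT : ∀ a ∈ C.T,
      (a.lhs = starTm Sg ∧ GoodTm Th a.rhs) ∨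
      (a.rhs = starTm Sg ∧ GoodTm Th a.lhs)
  finDom : FinDom C.θ
  nfθ : ∀ x : ℕ, NF Th (C.θ x) ∧ WFT Sg (C.θ x)
  disjAS : Disjoint (labels C.A) (labels C.S)
  disjAT : Disjoint (labels C.A) (labels C.T)
  disjST : Disjoint (labels C.S) (labels C.T)
  disjAD : Disjoint (labels C.A) (Dom C.θ)
  disjSD : Disjoint (labels C.S) (Dom C.θ)
  disjTD : Disjoint (labels C.T) (Dom C.θ)
  rvarEq : Rvar C.θ = labels C.A ∪ labels C.S ∪ labels C.T

/-- The substitution `{x ↦ t}`. -/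
def single (x : ℕ) (t : Tm F) : ℕ → Tm F :=
  fun z => if z = x then t else .var z

/-- Composition `θ{x ↦ t}` of a substitution with a single binding. -/
def compOne (θ : ℕ → Tm F) (x : ℕ) (t : Tm F) : ℕ → Tm F :=
  fun z => (θ z).subst (single x t)

/-- A variable is fresh for a configuration. -/
def FreshIn (C : Config F) (y : ℕ) : Prop :=
  y ∉ labels C.A ∧ y ∉ labels C.S ∧ y ∉ labels C.T ∧
  y ∉ Dom C.θ ∧ y ∉ Rvar C.θ

/-- Canonical choice of the next fresh variable for a configuration. -/
noncomputable def nextFresh (C : Config F) : ℕ :=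
  sInf {k : ℕ | ∀ m : ℕ, k ≤ m → FreshIn C m}

/-- The set of AUEs `{s₁ ≜_{y₁} t₁, …, sₙ ≜_{yₙ} tₙ}`. -/
def zipAUEs (ss : List (Tm F)) (ys : List ℕ) (ts : List (Tm F)) : Set (AUE F) :=
  {a | ∃ (i : ℕ) (h1 : i < ss.length) (h2 : i < ys.length) (h3 : i < ts.length),
      a = ⟨ss.get ⟨i, h1⟩, ys.get ⟨i, h2⟩, ts.get ⟨i, h3⟩⟩}

/-- The AUnif transformation rules: Decompose, Solve, the four Expansion rules
for left/right absorption, and Merge. -/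
inductive Step {Sg : AbsSig F} (Th : AbsTh Sg) : Config F → Config F → Prop where
  | dec (f : F) (ss ts : List (Tm F)) (x : ℕ) (ys : List ℕ)
      (A S T : Set (AUE F)) (θ : ℕ → Tm F)
      (hlen : ss.length = ts.length)
      (hnotin : (⟨.app f ss, x, .app f ts⟩ : AUE F) ∉ A)
      (hys : ys = (List.range ss.length).map
          (fun i => nextFresh (⟨insert ⟨.app f ss, x, .app f ts⟩ A, S, T, θ⟩ : Config F) + i)) :
      Step Th ⟨insert ⟨.app f ss, x, .app f ts⟩ A, S, T, θ⟩
        ⟨zipAUEs ss ys ts ∪ A, S, T, compOne θ x (.app f (ys.map Tm.var))⟩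
  | sol (a : AUE F) (A S T : Set (AUE F)) (θ : ℕ → Tm F)
      (hhead : a.lhs.head ≠ a.rhs.head)
      (hrel : ¬ RelatedAbs Th a.lhs a.rhs)
      (hnotin : a ∉ A) :
      Step Th ⟨insert a A, S, T, θ⟩ ⟨A, insert a S, T, θ⟩
  | expLA1 (f e : F) (t1 t2 : Tm F) (x y1 y2 : ℕ)
      (A S T : Set (AUE F)) (θ : ℕ → Tm F)
      (hp : (f, e) ∈ Th.pairs)
      (hnotin : (⟨.app e [], x, .app f [t1, t2]⟩ : AUE F) ∉ A)
      (hy1 : y1 = nextFresh (⟨insert ⟨.app e [], x, .app f [t1, t2]⟩ A, S, T, θ⟩ : Config F))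
      (hy2 : y2 = y1 + 1) :
      Step Th ⟨insert ⟨.app e [], x, .app f [t1, t2]⟩ A, S, T, θ⟩
        ⟨insert ⟨.app e [], y1, t1⟩ A, S, insert ⟨starTm Sg, y2, t2⟩ T,
          compOne θ x (.app f [.var y1, .var y2])⟩
  | expLA2 (f e : F) (t1 t2 : Tm F) (x y1 y2 : ℕ)
      (A S T : Set (AUE F)) (θ : ℕ → Tm F)
      (hp : (f, e) ∈ Th.pairs)
      (hnotin : (⟨.app e [], x, .app f [t1, t2]⟩ : AUE F) ∉ A)
      (hy1 : y1 = nextFresh (⟨insert ⟨.app e [], x, .app f [t1, t2]⟩ A, S, T, θ⟩ : Config F))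
      (hy2 : y2 = y1 + 1) :
      Step Th ⟨insert ⟨.app e [], x, .app f [t1, t2]⟩ A, S, T, θ⟩
        ⟨insert ⟨.app e [], y2, t2⟩ A, S, insert ⟨starTm Sg, y1, t1⟩ T,
          compOne θ x (.app f [.var y1, .var y2])⟩
  | expRA1 (f e : F) (s1 s2 : Tm F) (x y1 y2 : ℕ)
      (A S T : Set (AUE F)) (θ : ℕ → Tm F)
      (hp : (f, e) ∈ Th.pairs)
      (hnotin : (⟨.app f [s1, s2], x, .app e []⟩ : AUE F) ∉ A)
      (hy1 : y1 = nextFresh (⟨insert ⟨.app f [s1, s2], x, .app e []⟩ A, S, T, θ⟩ : Config F))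
      (hy2 : y2 = y1 + 1) :
      Step Th ⟨insert ⟨.app f [s1, s2], x, .app e []⟩ A, S, T, θ⟩
        ⟨insert ⟨s1, y1, .app e []⟩ A, S, insert ⟨s2, y2, starTm Sg⟩ T,
          compOne θ x (.app f [.var y1, .var y2])⟩
  | expRA2 (f e : F) (s1 s2 : Tm F) (x y1 y2 : ℕ)
      (A S T : Set (AUE F)) (θ : ℕ → Tm F)
      (hp : (f, e) ∈ Th.pairs)
      (hnotin : (⟨.app f [s1, s2], x, .app e []⟩ : AUE F) ∉ A)
      (hy1 : y1 = nextFresh (⟨insert ⟨.app f [s1, s2], x, .app e []⟩ A, S, T, θ⟩ : Config F))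
      (hy2 : y2 = y1 + 1) :
      Step Th ⟨insert ⟨.app f [s1, s2], x, .app e []⟩ A, S, T, θ⟩
        ⟨insert ⟨s2, y2, .app e []⟩ A, S, insert ⟨s1, y1, starTm Sg⟩ T,
          compOne θ x (.app f [.var y1, .var y2])⟩
  | mer (s t : Tm F) (x y : ℕ) (S T : Set (AUE F)) (θ : ℕ → Tm F)
      (hxy : x ≠ y)
      (hx : (⟨s, x, t⟩ : AUE F) ∉ S) (hy : (⟨s, y, t⟩ : AUE F) ∉ S) :
      Step Th ⟨∅, insert ⟨s, x, t⟩ (insert ⟨s, y, t⟩ S), T, θ⟩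
        ⟨∅, insert ⟨s, y, t⟩ S, T, compOne θ x (.var y)⟩

/-- A final (normal) configuration: no rule applies. -/
def Final {Sg : AbsSig F} (Th : AbsTh Sg) (C : Config F) : Prop :=
  ∀ C' : Config F, ¬ Step Th C C'

/-- `AUnif(C)`: the set of final configurations reachable from `C`. -/
def AUnifSet {Sg : AbsSig F} (Th : AbsTh Sg) (C : Config F) : Set (Config F) :=
  {C' | Relation.ReflTransGen (Step Th) C C' ∧ Final Th C'}

open Classical in
/-- The left substitution `σ_W` associated with a set of AUEs. -/
noncomputable def sigmaW (W : Set (AUE F)) : ℕ → Tm F :=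
  fun y => if h : ∃ a, a ∈ W ∧ a.lab = y then h.choose.lhs else .var y

open Classical in
/-- The right substitution `ρ_W` associated with a set of AUEs. -/
noncomputable def rhoW (W : Set (AUE F)) : ℕ → Tm F :=
  fun y => if h : ∃ a, a ∈ W ∧ a.lab = y then h.choose.rhs else .var y

/-- The abstraction set `↑(t, σ)`. -/
def absSet {Sg : AbsSig F} (Th : AbsTh Sg) (t : Tm F) (σ : ℕ → Tm F) : Set (Tm F) :=
  {r | AbsEq Th (r.subst σ) t ∧ NF Th r ∧ ∀ x : ℕ, VarIn x r → x ∈ Dom σ}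

/-- `Ψ(T, S)`: the set of abstraction substitutions of a configuration with
abstraction `T` and store `S`. -/
def Psi {Sg : AbsSig F} (Th : AbsTh Sg) (T S : Set (AUE F)) : Set (ℕ → Tm F) :=
  {τ | Dom τ = labels T ∧ ∀ a ∈ T,
      (a.lhs = starTm Sg → τ a.lab ∈ absSet Th a.rhs (rhoW S)) ∧
      (a.rhs = starTm Sg → τ a.lab ∈ absSet Th a.lhs (sigmaW S))}

/-- The initial configuration `⟨{s ≜_x t}; ∅; ∅; ι⟩` with starting label `xst`
and starting substitution `ι = {xst ↦ x}`. -/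
def initConfig (s t : Tm F) (x xst : ℕ) : Config F :=
  ⟨{⟨s, x, t⟩}, ∅, ∅, single xst (.var x)⟩

/-- `AUnif(C₀)` is merged: identical solved AUEs in (possibly different) final
stores carry the same label, and equal labels carry identical AUEs. -/
def Merged {Sg : AbsSig F} (Th : AbsTh Sg) (C0 : Config F) : Prop :=
  ∀ C1 ∈ AUnifSet Th C0, ∀ C2 ∈ AUnifSet Th C0, ∀ a ∈ C1.S, ∀ b ∈ C2.S,
    ((a.lhs = b.lhs ∧ a.rhs = b.rhs) ↔ a.lab = b.lab)

/-- `C_AUnif(s, t)`: all generalizations computed from final configurations of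
the initial configuration for `s ≜_x t`, instantiated by abstraction
substitutions. -/
def CAUnif {Sg : AbsSig F} (Th : AbsTh Sg) (s t : Tm F) (x xst : ℕ) : Set (Tm F) :=
  {g | ∃ C' ∈ AUnifSet Th (initConfig s t x xst),
      ∃ τ ∈ Psi Th C'.T C'.S, g = (C'.θ x).subst τ}

/-- Linear terms: no variable occurs more than once. -/
inductive Linear {F : Type} : Tm F → Prop where
  | var (x : ℕ) : Linear (.var x)
  | app (f : F) {ts : List (Tm F)} :
      (∀ t ∈ ts, Linear t) →
      List.Pairwise (fun s t => ∀ x : ℕ, VarIn x s → ¬ VarIn x t) ts →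
      Linear (.app f ts)

section MeasuredRelation

variable {α : Type*} {r : α → α → Prop} {P : α → Prop} (μ : α → ℕ)

theorem not_forall_rel_succ_of_measure (hP : ∀ {a b}, r a b → P a → P b)
    (hμ : ∀ {a b}, r a b → P a → μ b < μ a) (f : ℕ → α) (h0 : P (f 0)) :
    ¬ ∀ n, r (f n) (f (n + 1)) := by
  intro hf
  have hPf : ∀ n, P (f n) := fun n => Nat.rec h0 (fun n ih => hP (hf n) ih) n
  obtain ⟨n, hn⟩ := WellFounded.not_rel_apply_succ (r := (· < ·)) (μ ∘ f)
  exact hn (hμ (hf n) (hPf n))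

/-- A form of König's lemma. -/
theorem finite_setOf_reflTransGen_of_measure (hP : ∀ {a b}, r a b → P a → P b)
    (hμ : ∀ {a b}, r a b → P a → μ b < μ a) (hfin : ∀ {a}, P a → {b | r a b}.Finite)
    {a : α} (ha : P a) : {b | Relation.ReflTransGen r a b}.Finite := by
  induction hm : μ a using Nat.strong_induction_on generalizing a with
  | _ n ih =>
  have hsub : {b | Relation.ReflTransGen r a b} ⊆
      insert a (⋃ c ∈ {c | r a c}, {b | Relation.ReflTransGen r c b}) := by
    intro b hb
    rcases hb.cases_head with rfl | ⟨c, hac, hcb⟩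
    · exact Set.mem_insert _ _
    · exact Set.mem_insert_of_mem _ (Set.mem_biUnion hac hcb)
  refine (((hfin ha).biUnion fun c hc => ?_).insert a).subset hsub
  exact ih _ (hm ▸ hμ hc ha) (hP hc ha) rfl

end MeasuredRelation

def Tm.size : Tm F → ℕ
  | .var _ => 1
  | .app _ ts => 1 + (ts.map Tm.size).sum

lemma Tm.one_le_size (t : Tm F) : 1 ≤ t.size := by
  cases t <;> simp [Tm.size]

def AUE.weight (a : AUE F) : ℕ := a.lhs.size + a.rhs.size

lemma AUE.two_le_weight (a : AUE F) : 2 ≤ a.weight := by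
  have := a.lhs.one_le_size
  have := a.rhs.one_le_size
  unfold AUE.weight
  omega

noncomputable def totalWeight (W : Set (AUE F)) : ℕ := ∑ᶠ a ∈ W, a.weight

lemma totalWeight_singleton (a : AUE F) : totalWeight {a} = a.weight := finsum_mem_singleton

lemma totalWeight_insert {a : AUE F} {W : Set (AUE F)} (ha : a ∉ W) (hW : W.Finite) :
    totalWeight (insert a W) = a.weight + totalWeight W :=
  finsum_mem_insert _ ha hW

lemma totalWeight_union_le {V W : Set (AUE F)} (hV : V.Finite) (hW : W.Finite) :
    totalWeight (V ∪ W) ≤ totalWeight V + totalWeight W := by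
  have := finsum_mem_union_inter (f := AUE.weight) hV hW
  unfold totalWeight
  omega

lemma totalWeight_union_lt_insert {a : AUE F} {V W : Set (AUE F)} (ha : a ∉ W)
    (hV : V.Finite) (hW : W.Finite) (h : totalWeight V < a.weight) :
    totalWeight (V ∪ W) < totalWeight (insert a W) := by
  have := totalWeight_union_le hV hW
  rw [totalWeight_insert ha hW]
  omega

lemma totalWeight_insert_lt_insert {a b : AUE F} {W : Set (AUE F)} (ha : a ∉ W)
    (hW : W.Finite) (h : b.weight < a.weight) :
    totalWeight (insert b W) < totalWeight (insert a W) := by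
  rw [Set.insert_eq]
  exact totalWeight_union_lt_insert ha (Set.finite_singleton b) hW
    (by rwa [totalWeight_singleton])

lemma zipAUEs_cons (s t : Tm F) (y : ℕ) (ss ts : List (Tm F)) (ys : List ℕ) :
    zipAUEs (s :: ss) (y :: ys) (t :: ts) = insert ⟨s, y, t⟩ (zipAUEs ss ys ts) := by
  ext a
  constructor
  · rintro ⟨_ | i, h1, h2, h3, rfl⟩
    · exact Or.inl rfl
    · exact Or.inr ⟨i, Nat.lt_of_succ_lt_succ h1, Nat.lt_of_succ_lt_succ h2,
        Nat.lt_of_succ_lt_succ h3, rfl⟩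
  · rintro (rfl | ⟨i, h1, h2, h3, rfl⟩)
    · exact ⟨0, by simp, by simp, by simp, rfl⟩
    · exact ⟨i + 1, by simpa, by simpa, by simpa, rfl⟩

lemma zipAUEs_eq_empty {ss ts : List (Tm F)} {ys : List ℕ} (h : ss = [] ∨ ys = [] ∨ ts = []) :
    zipAUEs ss ys ts = ∅ := by
  refine Set.eq_empty_of_forall_notMem ?_
  rintro _ ⟨i, h1, h2, h3, -⟩
  rcases h with rfl | rfl | rfl <;> simp at h1 h2 h3

theorem zipAUEs_finite_and_totalWeight_le :
    ∀ (ss : List (Tm F)) (ys : List ℕ) (ts : List (Tm F)), (zipAUEs ss ys ts).Finite ∧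
      totalWeight (zipAUEs ss ys ts) ≤ (ss.map Tm.size).sum + (ts.map Tm.size).sum
  | s :: ss, y :: ys, t :: ts => by
    obtain ⟨hfin, hle⟩ := zipAUEs_finite_and_totalWeight_le ss ys ts
    have := totalWeight_union_le (Set.finite_singleton ⟨s, y, t⟩) hfin
    rw [zipAUEs_cons, Set.insert_eq, totalWeight_singleton] at *
    refine ⟨(Set.finite_singleton _).union hfin, ?_⟩
    simp only [AUE.weight, List.map_cons, List.sum_cons] at *
    omega
  | [], _, _ | _ :: _, [], _ | _ :: _, _ :: _, [] => by
    rw [zipAUEs_eq_empty (by simp)]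
    simp [totalWeight]

namespace Config

variable {Sg : AbsSig F}

def Finite (C : Config F) : Prop := C.A.Finite ∧ C.S.Finite

/-- Only meaningful for `C.Finite`: `∑ᶠ` and `ncard` are `0` on infinite sets. -/
noncomputable def weight (C : Config F) : ℕ := totalWeight C.A + C.S.ncard

noncomputable def expand (C : Config F) (a : AUE F) (f : F) (b w : AUE F) : Config F :=
  ⟨insert b (C.A \ {a}), C.S, insert w C.T,
    compOne C.θ a.lab (.app f [.var (nextFresh C), .var (nextFresh C + 1)])⟩

/-- Contains every successor of `C` by a rule other than Merge applied to `a`; the side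
conditions of the rules are not checked. -/
noncomputable def redexSuccessors (Sg : AbsSig F) (C : Config F) (a : AUE F) :
    Set (Config F) :=
  let y := nextFresh C
  insert ⟨C.A \ {a}, insert a C.S, C.T, C.θ⟩ <|
  (match a.lhs, a.rhs with
    | .app f ss, .app _ ts =>
      let ys := (List.range ss.length).map (y + ·)
      {⟨zipAUEs ss ys ts ∪ (C.A \ {a}), C.S, C.T, compOne C.θ a.lab (.app f (ys.map .var))⟩}
    | _, _ => ∅) ∪
  (match a.rhs with
    | .app f [t1, t2] =>
      {C.expand a f ⟨a.lhs, y, t1⟩ ⟨starTm Sg, y + 1, t2⟩,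
        C.expand a f ⟨a.lhs, y + 1, t2⟩ ⟨starTm Sg, y, t1⟩}
    | _ => ∅) ∪
  (match a.lhs with
    | .app f [s1, s2] =>
      {C.expand a f ⟨s1, y, a.rhs⟩ ⟨s2, y + 1, starTm Sg⟩,
        C.expand a f ⟨s2, y + 1, a.rhs⟩ ⟨s1, y, starTm Sg⟩}
    | _ => ∅)

noncomputable def successors (Sg : AbsSig F) (C : Config F) : Set (Config F) :=
  (⋃ a ∈ C.A, redexSuccessors Sg C a) ∪
    (fun p : AUE F × AUE F => ⟨∅, C.S \ {p.1}, C.T, compOne C.θ p.1.lab (.var p.2.lab)⟩) ''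
      (C.S ×ˢ C.S)

lemma redexSuccessors_finite (C : Config F) (a : AUE F) : (redexSuccessors Sg C a).Finite := by
  unfold redexSuccessors
  refine Set.Finite.insert _ (Set.Finite.union (Set.Finite.union ?_ ?_) ?_) <;> split <;> simp

lemma successors_finite {C : Config F} (hC : C.Finite) : (successors Sg C).Finite :=
  (hC.1.biUnion fun a _ => redexSuccessors_finite C a).union ((hC.2.prod hC.2).image _)

end Config

namespace Step

variable {Sg : AbsSig F} {Th : AbsTh Sg} {C C' : Config F}

lemma mem_successors (h : Step Th C C') : C' ∈ C.successors Sg := by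
  cases h with
  | mer s t x y S T θ hxy hx =>
    exact Or.inr ⟨(⟨s, x, t⟩, ⟨s, y, t⟩), by simp, by simp [hx, hxy]⟩
  | _ =>
    refine Or.inl (Set.mem_biUnion (Set.mem_insert _ _) ?_)
    simp_all [Config.redexSuccessors, Config.expand]

lemma finite (h : Step Th C C') (hC : C.Finite) : C'.Finite := by
  obtain ⟨hA, hS⟩ := hC
  cases h with
  | dec f ss ts x ys A S T θ =>
    exact ⟨(zipAUEs_finite_and_totalWeight_le ss ys ts).1.union (Set.finite_insert.1 hA), hS⟩
  | sol a A S T θ => exact ⟨Set.finite_insert.1 hA, hS.insert a⟩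
  | mer s t x y S T θ => exact ⟨Set.finite_empty, Set.finite_insert.1 hS⟩
  | _ => exact ⟨(Set.finite_insert.1 hA).insert _, hS⟩

lemma weight_lt (h : Step Th C C') (hC : C.Finite) : C'.weight < C.weight := by
  obtain ⟨hA, hS⟩ := hC
  unfold Config.weight
  cases h with
  | dec f ss ts x ys A S T θ _ hnotin =>
    obtain ⟨hZ, hZw⟩ := zipAUEs_finite_and_totalWeight_le ss ys ts
    have := totalWeight_union_lt_insert hnotin hZ (Set.finite_insert.1 hA)
      (by simp only [AUE.weight, Tm.size]; omega)
    dsimp only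
    omega
  | sol a A S T θ _ _ hnotin =>
    have := Set.ncard_insert_le a S
    have := a.two_le_weight
    dsimp only
    rw [totalWeight_insert hnotin (Set.finite_insert.1 hA)]
    omega
  | mer s t x y S T θ hxy hx =>
    dsimp only
    rw [Set.ncard_insert_of_notMem _ (Set.finite_insert.1 hS)]
    · simp
    · simp [hx, hxy]
  | _ =>
    refine Nat.add_lt_add_right (totalWeight_insert_lt_insert ?_ (Set.finite_insert.1 hA) ?_) _
    · assumption
    · simp only [AUE.weight, Tm.size, List.map, List.sum_cons, List.sum_nil]
      omega

end Step

lemma finite_setOf_step {Sg : AbsSig F} {Th : AbsTh Sg} {C : Config F} (hC : C.Finite) :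
    {C' | Step Th C C'}.Finite :=
  (Config.successors_finite hC).subset fun _ h => Step.mem_successors h

/-- Termination, Theorem 1: AUnif admits no infinite derivation
starting from a configuration, and for every configuration `C` the set
`AUnif(C)` of final configurations reachable from `C` is finite. -/
theorem aunif_termination {F : Type} {Sg : AbsSig F} (Th : AbsTh Sg) :
    (∀ seq : ℕ → Config F, IsConfig Th (seq 0) →
        ¬ (∀ n : ℕ, Step Th (seq n) (seq (n + 1)))) ∧
    (∀ C : Config F, IsConfig Th C → (AUnifSet Th C).Finite) := by
  constructor
  · intro seq h0
    exact not_forall_rel_succ_of_measure (r := Step Th) (P := Config.Finite) Config.weight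
      Step.finite Step.weight_lt seq ⟨h0.finA, h0.finS⟩
  · intro C hC
    have hreach := finite_setOf_reflTransGen_of_measure (r := Step Th) (P := Config.Finite)
      Config.weight Step.finite Step.weight_lt finite_setOf_step ⟨hC.finA, hC.finS⟩
    exact hreach.subset fun _ h => h.1

end AbsAU
end

section
/- Soundness of AUnif: let D be a derivation ⟨A0;S0;T0;θ0⟩ ⟹* ⟨∅;S_n;T_n;θ_n⟩ by AUnif rules ending in a final configuration, and let σ_D = σ_{S_n ∪ T_n} and ρ_D = ρ_{S_n ∪ T_n}. Then for every AUE s ≜_x t ∈ A0 ∪ S0 ∪ T0, the term xθ_n is an Abs-generalization of s and t; more precisely, xθ_n σ_D ≈_Abs s and xθ_n ρ_D ≈_Abs t. -/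
/- Common development: first-order terms, absorption theories, anti-unification
   equations, configurations and the AUnif transformation rules. -/

namespace AbsAU

variable {F : Type}

/-!
Soundness is an invariant of single steps. Say that `r` generalizes `s` and `t` via a set `W`
of AUEs if every variable of `r` labels an AUE of `W`, `r σ_W ≈ s` and `r ρ_W ≈ t`. A Solve
step only moves an AUE from `A` to `S`. Every other step replaces the AUE `s ≜_x t` by AUEs
with fresh labels (or, for Merge, drops it) and composes `θ` with a binding `x ↦ u` such
that `u σ_{W'} ≈ s` and `u ρ_{W'} ≈ t`; for the expansion rules this is an instance of an
absorption axiom, e.g. `f(ε_f, ⋆) ≈ ε_f`. Such a binding turns a generalization via `W` into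
one via `W'`. Initially `xθ₀ = x` generalizes `s` and `t` via `A₀ ∪ S₀ ∪ T₀`, and at the end
`A = ∅`.
-/

namespace Tm

theorem ind {P : Tm F → Prop} (hvar : ∀ x, P (.var x))
    (happ : ∀ f ts, (∀ t ∈ ts, P t) → P (.app f ts)) : ∀ t, P t
  | .var x => hvar x
  | .app f ts => happ f ts fun t _ => Tm.ind hvar happ t
decreasing_by
  have := List.sizeOf_lt_of_mem ‹t ∈ ts›
  simp only [Tm.app.sizeOf_spec]
  omega

@[simp] theorem subst_var (σ : ℕ → Tm F) (x : ℕ) : (var x).subst σ = σ x := by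
  simp [subst]

@[simp] theorem subst_app (σ : ℕ → Tm F) (f : F) (ts : List (Tm F)) :
    (app f ts).subst σ = app f (ts.map (subst σ)) := by
  rw [subst]
  exact congrArg _ (List.attach_map_val (l := ts) (f := subst σ))

theorem subst_subst (σ τ : ℕ → Tm F) (t : Tm F) :
    (t.subst σ).subst τ = t.subst fun v => (σ v).subst τ := by
  induction t using Tm.ind with
  | hvar x => simp
  | happ f ts ih =>
    simp only [subst_app, List.map_map]
    exact congrArg _ (List.map_congr_left ih)

end Tm

open Tm

theorem VarIn.exists_of_subst {σ : ℕ → Tm F} {v : ℕ} {t : Tm F} (h : VarIn v (t.subst σ)) :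
    ∃ w, VarIn w t ∧ VarIn v (σ w) := by
  induction t using Tm.ind with
  | hvar x => exact ⟨x, .var x, by simpa using h⟩
  | happ f ts ih =>
    rw [subst_app] at h
    cases h with
    | app _ hmem hv =>
      obtain ⟨t, ht, rfl⟩ := List.mem_map.mp hmem
      obtain ⟨w, hw, hvw⟩ := ih t ht hv
      exact ⟨w, .app f ht hw, hvw⟩

theorem finite_setOf_varIn (t : Tm F) : {x | VarIn x t}.Finite := by
  induction t using Tm.ind with
  | hvar x => exact (Set.finite_singleton x).subset fun y hy => by cases hy; rfl
  | happ f ts ih =>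
    refine ((List.finite_toSet ts).biUnion ih).subset fun y hy => ?_
    cases hy with
    | app _ ht hy => exact Set.mem_biUnion ht hy

theorem AbsEq.subst_congr {Sg : AbsSig F} {Th : AbsTh Sg} {σ τ : ℕ → Tm F} {t : Tm F}
    (h : ∀ v, VarIn v t → AbsEq Th (σ v) (τ v)) : AbsEq Th (t.subst σ) (t.subst τ) := by
  induction t using Tm.ind with
  | hvar x => simpa using h x (.var x)
  | happ f ts ih =>
    simp only [subst_app]
    refine .congr f (List.forall₂_map_left_iff.mpr (List.forall₂_map_right_iff.mpr ?_))
    exact List.forall₂_same.mpr fun t ht => ih t ht fun v hv => h v (.app f ht hv)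

theorem FinDom.finite_rvar {θ : ℕ → Tm F} (h : FinDom θ) : (Rvar θ).Finite :=
  (h.biUnion fun z _ => finite_setOf_varIn (θ z)).subset
    fun _ ⟨_, hz, hy⟩ => Set.mem_biUnion hz hy

theorem dom_compOne_subset (θ : ℕ → Tm F) (x : ℕ) (u : Tm F) :
    Dom (compOne θ x u) ⊆ insert x (Dom θ) := by
  intro z hz
  by_contra hzx
  simp only [Set.mem_insert_iff, not_or] at hzx
  apply hz
  change (θ z).subst (single x u) = .var z
  rw [not_not.mp hzx.2, subst_var, single, if_neg hzx.1]

theorem finite_zipAUEs (ss : List (Tm F)) (ys : List ℕ) (ts : List (Tm F)) :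
    (zipAUEs ss ys ts).Finite :=
  (Set.finite_range fun i : Fin ss.length =>
    (⟨ss[i], ys.getD i 0, ts.getD i (.var 0)⟩ : AUE F)).subset <| by
    rintro _ ⟨i, h₁, h₂, h₃, rfl⟩
    exact ⟨⟨i, h₁⟩, by simp [h₂, h₃]⟩

theorem mem_labels {W : Set (AUE F)} {a : AUE F} (h : a ∈ W) : a.lab ∈ labels W :=
  Set.mem_image_of_mem _ h

theorem labels_mono {W W' : Set (AUE F)} (h : W ⊆ W') : labels W ⊆ labels W' :=
  Set.image_mono h

theorem ValidAUEs.mono {W W' : Set (AUE F)} (h : W ⊆ W') (hW' : ValidAUEs W') : ValidAUEs W :=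
  fun a ha b hb => hW' a (h ha) b (h hb)

theorem ValidAUEs.union {W W' : Set (AUE F)} (hW : ValidAUEs W) (hW' : ValidAUEs W')
    (hd : Disjoint (labels W) (labels W')) : ValidAUEs (W ∪ W') := by
  rintro a (ha | ha) b (hb | hb) hab
  · exact hW a ha b hb hab
  · exact absurd (hab ▸ mem_labels hb) (Set.disjoint_left.mp hd (mem_labels ha))
  · exact absurd (hab ▸ mem_labels ha) (Set.disjoint_left.mp hd (mem_labels hb))
  · exact hW' a ha b hb hab

section Substitutions

variable {W W' : Set (AUE F)} {a : AUE F} {v : ℕ}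

theorem choose_eq_of_valid (hW : ValidAUEs W) (ha : a ∈ W)
    (h : ∃ b, b ∈ W ∧ b.lab = a.lab) : h.choose = a :=
  hW _ h.choose_spec.1 _ ha h.choose_spec.2

theorem sigmaW_lab (hW : ValidAUEs W) (ha : a ∈ W) : sigmaW W a.lab = a.lhs := by
  have h : ∃ b, b ∈ W ∧ b.lab = a.lab := ⟨a, ha, rfl⟩
  rw [sigmaW, dif_pos h, choose_eq_of_valid hW ha h]

theorem rhoW_lab (hW : ValidAUEs W) (ha : a ∈ W) : rhoW W a.lab = a.rhs := by
  have h : ∃ b, b ∈ W ∧ b.lab = a.lab := ⟨a, ha, rfl⟩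
  rw [rhoW, dif_pos h, choose_eq_of_valid hW ha h]

theorem not_exists_lab_eq (hv : v ∉ labels W) : ¬ ∃ b, b ∈ W ∧ b.lab = v :=
  fun ⟨_, hb, hbv⟩ => hv (hbv ▸ mem_labels hb)

theorem finDom_sigmaW (hW : W.Finite) : FinDom (sigmaW W) :=
  (hW.image AUE.lab).subset fun v hv => by
    by_contra h
    exact hv (by rw [sigmaW, dif_neg (not_exists_lab_eq h)])

theorem finDom_rhoW (hW : W.Finite) : FinDom (rhoW W) :=
  (hW.image AUE.lab).subset fun v hv => by
    by_contra h
    exact hv (by rw [rhoW, dif_neg (not_exists_lab_eq h)])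

theorem sigmaW_eq_of_subset (hW' : ValidAUEs W') (h : W ⊆ W') (hv : v ∈ labels W) :
    sigmaW W' v = sigmaW W v := by
  obtain ⟨b, hb, rfl⟩ := hv
  rw [sigmaW_lab hW' (h hb), sigmaW_lab (hW'.mono h) hb]

theorem rhoW_eq_of_subset (hW' : ValidAUEs W') (h : W ⊆ W') (hv : v ∈ labels W) :
    rhoW W' v = rhoW W v := by
  obtain ⟨b, hb, rfl⟩ := hv
  rw [rhoW_lab hW' (h hb), rhoW_lab (hW'.mono h) hb]

end Substitutions

section Soundness

variable {Sg : AbsSig F} {Th : AbsTh Sg}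

structure GenVia (Th : AbsTh Sg) (W : Set (AUE F)) (r s t : Tm F) : Prop where
  varIn_mem : ∀ v, VarIn v r → v ∈ labels W
  lhs : AbsEq Th (r.subst (sigmaW W)) s
  rhs : AbsEq Th (r.subst (rhoW W)) t

theorem GenVia.var_lab {W : Set (AUE F)} {a : AUE F} (hW : ValidAUEs W) (ha : a ∈ W) :
    GenVia Th W (.var a.lab) a.lhs a.rhs where
  varIn_mem v hv := by cases hv; exact mem_labels ha
  lhs := by rw [subst_var, sigmaW_lab hW ha]; exact .refl _
  rhs := by rw [subst_var, rhoW_lab hW ha]; exact .refl _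

theorem GenVia.gen {W : Set (AUE F)} {r s t : Tm F} (hW : W.Finite) (h : GenVia Th W r s t) :
    Gen Th r s t :=
  ⟨⟨_, finDom_sigmaW hW, h.lhs⟩, ⟨_, finDom_rhoW hW, h.rhs⟩⟩

/-- Replacing the AUEs `W` by `W'` together with the binding `x ↦ u` is sound. -/
structure SoundBinding (Th : AbsTh Sg) (W W' : Set (AUE F)) (x : ℕ) (u : Tm F) : Prop where
  valid : ValidAUEs W'
  mem_of_lab_ne : ∀ b ∈ W, b.lab ≠ x → b ∈ W'
  varIn_mem : ∀ v, VarIn v u → v ∈ labels W'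
  lhs : AbsEq Th (u.subst (sigmaW W')) (sigmaW W x)
  rhs : AbsEq Th (u.subst (rhoW W')) (rhoW W x)

theorem absEq_subst_single_subst {r u : Tm F} {x : ℕ} {μ μ' : ℕ → Tm F}
    (hx : AbsEq Th (u.subst μ') (μ x)) (hagree : ∀ w, VarIn w r → w ≠ x → μ' w = μ w) :
    AbsEq Th ((r.subst (single x u)).subst μ') (r.subst μ) := by
  rw [subst_subst]
  refine AbsEq.subst_congr fun w hw => ?_
  by_cases hwx : w = x
  · subst hwx
    simpa [single] using hx
  · simpa [single, hwx] using hagree w hw hwx ▸ AbsEq.refl _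

theorem GenVia.subst_single {W W' : Set (AUE F)} {r s t u : Tm F} {x : ℕ}
    (hW : ValidAUEs W) (h : GenVia Th W r s t) (hb : SoundBinding Th W W' x u) :
    GenVia Th W' (r.subst (single x u)) s t := by
  have hkeep : ∀ w, VarIn w r → w ≠ x → ∃ b ∈ W', b ∈ W ∧ b.lab = w := by
    intro w hw hwx
    obtain ⟨b, hb', rfl⟩ := h.varIn_mem w hw
    exact ⟨b, hb.mem_of_lab_ne b hb' hwx, hb', rfl⟩
  refine ⟨fun v hv => ?_, ?_, ?_⟩
  · obtain ⟨w, hw, hvw⟩ := hv.exists_of_subst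
    by_cases hwx : w = x
    · rw [hwx, single, if_pos rfl] at hvw
      exact hb.varIn_mem v hvw
    · rw [single, if_neg hwx] at hvw
      cases hvw
      obtain ⟨b, hbW', -, rfl⟩ := hkeep v hw hwx
      exact mem_labels hbW'
  · refine (absEq_subst_single_subst hb.lhs fun w hw hwx => ?_).trans h.lhs
    obtain ⟨b, hbW', hbW, rfl⟩ := hkeep w hw hwx
    rw [sigmaW_lab hb.valid hbW', sigmaW_lab hW hbW]
  · refine (absEq_subst_single_subst hb.rhs fun w hw hwx => ?_).trans h.rhs
    obtain ⟨b, hbW', hbW, rfl⟩ := hkeep w hw hwx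
    rw [rhoW_lab hb.valid hbW', rhoW_lab hW hbW]

theorem SoundBinding.of_fresh {a : AUE F} {R N : Set (AUE F)} {u : Tm F}
    (hW : ValidAUEs (insert a R)) (hN : ValidAUEs N)
    (hfresh : Disjoint (labels N) (labels (insert a R)))
    (hu : ∀ v, VarIn v u → v ∈ labels N)
    (hl : AbsEq Th (u.subst (sigmaW N)) a.lhs) (hr : AbsEq Th (u.subst (rhoW N)) a.rhs) :
    SoundBinding Th (insert a R) (N ∪ R) a.lab u := by
  have hvalid : ValidAUEs (N ∪ R) :=
    hN.union (hW.mono (Set.subset_insert a R))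
      (hfresh.mono_right (labels_mono (Set.subset_insert a R)))
  refine ⟨hvalid, fun b hb hba => ?_, fun v hv => labels_mono Set.subset_union_left (hu v hv),
    ?_, ?_⟩
  · rcases hb with rfl | hb
    · exact absurd rfl hba
    · exact Or.inr hb
  · rw [sigmaW_lab hW (Set.mem_insert a R)]
    refine .trans (AbsEq.subst_congr fun v hv => ?_) hl
    rw [sigmaW_eq_of_subset hvalid Set.subset_union_left (hu v hv)]
    exact .refl _
  · rw [rhoW_lab hW (Set.mem_insert a R)]
    refine .trans (AbsEq.subst_congr fun v hv => ?_) hr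
    rw [rhoW_eq_of_subset hvalid Set.subset_union_left (hu v hv)]
    exact .refl _

theorem SoundBinding.decompose {f : F} {ss ts : List (Tm F)} {x : ℕ} {ys : List ℕ}
    {R : Set (AUE F)} (hW : ValidAUEs (insert ⟨.app f ss, x, .app f ts⟩ R))
    (hlen : ss.length = ts.length) (hys : ys.length = ss.length) (hnd : ys.Nodup)
    (hfresh : ∀ y ∈ ys, y ∉ labels (insert ⟨.app f ss, x, .app f ts⟩ R)) :
    SoundBinding Th (insert ⟨.app f ss, x, .app f ts⟩ R) (zipAUEs ss ys ts ∪ R) x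
      (.app f (ys.map .var)) := by
  have hmem : ∀ i (hi : i < ys.length),
      (⟨ss[i], ys[i], ts[i]⟩ : AUE F) ∈ zipAUEs ss ys ts :=
    fun i hi => ⟨i, by omega, hi, by omega, rfl⟩
  have hN : ValidAUEs (zipAUEs ss ys ts) := by
    rintro _ ⟨i, hi₁, hi, hi₃, rfl⟩ _ ⟨j, hj₁, hj, hj₃, rfl⟩ hij
    obtain rfl : i = j := hnd.getElem_inj_iff.mp hij
    rfl
  have hmap : ∀ μ : ℕ → Tm F, (Tm.app f (ys.map .var)).subst μ = .app f (ys.map μ) := by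
    simp
  refine SoundBinding.of_fresh (a := ⟨.app f ss, x, .app f ts⟩) hW hN ?_ ?_ ?_ ?_
  · refine Set.disjoint_left.mpr ?_
    rintro _ ⟨_, ⟨i, -, hi, -, rfl⟩, rfl⟩
    exact hfresh _ (List.getElem_mem hi)
  · intro v hv
    cases hv with
    | app _ ht hv =>
      obtain ⟨y, hy, rfl⟩ := List.mem_map.mp ht
      cases hv
      obtain ⟨i, hi, rfl⟩ := List.getElem_of_mem hy
      exact mem_labels (hmem i hi)
  · have hσ : ys.map (sigmaW (zipAUEs ss ys ts)) = ss :=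
      List.ext_getElem (by simp [hys]) fun i hi _ => by
        simpa using sigmaW_lab hN (hmem i (by simpa using hi))
    rw [hmap, hσ]
    exact .refl _
  · have hρ : ys.map (rhoW (zipAUEs ss ys ts)) = ts :=
      List.ext_getElem (by simp [hys, hlen]) fun i hi _ => by
        simpa using rhoW_lab hN (hmem i (by simpa using hi))
    rw [hmap, hρ]
    exact .refl _

theorem SoundBinding.expand {f : F} {a n₁ n₂ : AUE F} {R : Set (AUE F)}
    (hW : ValidAUEs (insert a R)) (h₁ : n₁.lab ∉ labels (insert a R))
    (h₂ : n₂.lab ∉ labels (insert a R)) (h₁₂ : n₁.lab ≠ n₂.lab)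
    (hl : AbsEq Th (.app f [n₁.lhs, n₂.lhs]) a.lhs)
    (hr : AbsEq Th (.app f [n₁.rhs, n₂.rhs]) a.rhs) :
    SoundBinding Th (insert a R) ({n₁, n₂} ∪ R) a.lab
      (.app f [.var n₁.lab, .var n₂.lab]) := by
  have hN : ValidAUEs ({n₁, n₂} : Set (AUE F)) := by
    rintro _ (rfl | rfl) _ (rfl | rfl) h
    exacts [rfl, absurd h h₁₂, absurd h.symm h₁₂, rfl]
  have hn₁ : n₁ ∈ ({n₁, n₂} : Set (AUE F)) := Set.mem_insert _ _
  have hn₂ : n₂ ∈ ({n₁, n₂} : Set (AUE F)) := Set.mem_insert_of_mem _ rfl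
  refine SoundBinding.of_fresh hW hN ?_ ?_ ?_ ?_
  · refine Set.disjoint_left.mpr ?_
    rintro _ ⟨_, rfl | rfl, rfl⟩
    exacts [h₁, h₂]
  · intro v hv
    cases hv with
    | app _ ht hv =>
      rcases List.mem_pair.mp ht with rfl | rfl <;> cases hv
      exacts [mem_labels hn₁, mem_labels hn₂]
  · simpa [sigmaW_lab hN hn₁, sigmaW_lab hN hn₂] using hl
  · simpa [rhoW_lab hN hn₁, rhoW_lab hN hn₂] using hr

theorem SoundBinding.merge {s t : Tm F} {x y : ℕ} {R : Set (AUE F)}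
    (hW : ValidAUEs (insert ⟨s, x, t⟩ R)) (hy : ⟨s, y, t⟩ ∈ R) :
    SoundBinding Th (insert ⟨s, x, t⟩ R) R x (.var y) := by
  have hR := hW.mono (Set.subset_insert _ R)
  have hx : (⟨s, x, t⟩ : AUE F) ∈ insert ⟨s, x, t⟩ R := Set.mem_insert _ R
  refine ⟨hR, fun b hb hbx => ?_, fun v hv => ?_, ?_, ?_⟩
  · rcases hb with rfl | hb
    · exact absurd rfl hbx
    · exact hb
  · cases hv
    exact mem_labels hy
  · rw [subst_var, sigmaW_lab hR hy, sigmaW_lab hW hx]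
    exact .refl _
  · rw [subst_var, rhoW_lab hR hy, rhoW_lab hW hx]
    exact .refl _

end Soundness

def Config.aues (C : Config F) : Set (AUE F) := C.A ∪ C.S ∪ C.T

/-- Finiteness makes `nextFresh C` fresh; otherwise it is the junk value `sInf ∅ = 0`. -/
structure Admissible (C : Config F) : Prop where
  finite : C.aues.Finite
  finDom : FinDom C.θ
  valid : ValidAUEs C.aues

theorem IsConfig.admissible {Sg : AbsSig F} {Th : AbsTh Sg} {C : Config F} (h : IsConfig Th C) :
    Admissible C where
  finite := (h.finA.union h.finS).union h.finT
  finDom := h.finDom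
  valid := by
    refine (h.validA.union h.validS h.disjAS).union h.validT ?_
    rw [labels, Set.image_union]
    exact Disjoint.union_left h.disjAT h.disjST

theorem Admissible.nextFresh_add_notMem {C : Config F} (hC : Admissible C) (i : ℕ) :
    nextFresh C + i ∉ labels C.aues := by
  have hfin : (labels C.aues ∪ Dom C.θ ∪ Rvar C.θ).Finite :=
    ((hC.finite.image _).union hC.finDom).union hC.finDom.finite_rvar
  obtain ⟨N, hN⟩ := hfin.bddAbove
  have hlabels : labels C.aues = labels C.A ∪ labels C.S ∪ labels C.T := by
    simp only [labels, Config.aues, Set.image_union]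
  have hfresh : N + 1 ∈ {k | ∀ m, k ≤ m → FreshIn C m} := fun m hm => by
    have hm' : m ∉ labels C.aues ∪ Dom C.θ ∪ Rvar C.θ := fun h => by
      have := hN h
      omega
    simp only [hlabels, Set.mem_union, not_or] at hm'
    exact ⟨hm'.1.1.1.1, hm'.1.1.1.2, hm'.1.1.2, hm'.1.2, hm'.2⟩
  obtain ⟨hA, hS, hT, -, -⟩ := Nat.sInf_mem ⟨_, hfresh⟩ _ (Nat.le_add_right _ i)
  rw [hlabels]
  simp only [Set.mem_union, not_or]
  exact ⟨⟨hA, hS⟩, hT⟩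

section Derivations

variable {Sg : AbsSig F} {Th : AbsTh Sg} {C C' : Config F}

def PreservesGen (Th : AbsTh Sg) (C C' : Config F) : Prop :=
  ∀ z s t, GenVia Th C.aues (C.θ z) s t → GenVia Th C'.aues (C'.θ z) s t

theorem Admissible.step_of_soundBinding {x : ℕ} {u : Tm F} (hC : Admissible C)
    (hfin : C'.aues.Finite) (hθ : C'.θ = compOne C.θ x u)
    (hb : SoundBinding Th C.aues C'.aues x u) :
    Admissible C' ∧ PreservesGen Th C C' := by
  refine ⟨⟨hfin, ?_, hb.valid⟩, fun z s t h => ?_⟩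
  · rw [hθ]
    exact ((hC.finDom.insert x).subset (dom_compOne_subset _ _ _))
  · rw [hθ]
    exact h.subst_single hC.valid hb

theorem Admissible.step_decompose {f : F} {ss ts : List (Tm F)} {x : ℕ} {ys : List ℕ}
    {R : Set (AUE F)} (hC : Admissible C) (hW : C.aues = insert ⟨.app f ss, x, .app f ts⟩ R)
    (hW' : C'.aues = zipAUEs ss ys ts ∪ R) (hθ : C'.θ = compOne C.θ x (.app f (ys.map .var)))
    (hlen : ss.length = ts.length)
    (hys : ys = (List.range ss.length).map (nextFresh C + ·)) :
    Admissible C' ∧ PreservesGen Th C C' := by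
  have hR : R.Finite := hC.finite.subset (hW ▸ Set.subset_insert _ R)
  refine hC.step_of_soundBinding (hW' ▸ (finite_zipAUEs ss ys ts).union hR) hθ ?_
  rw [hW, hW']
  refine .decompose (hW ▸ hC.valid) hlen (by simp [hys]) ?_ fun y hy => ?_
  · exact hys ▸ List.nodup_range.map (add_right_injective _)
  · obtain ⟨i, -, rfl⟩ := List.mem_map.mp (hys ▸ hy)
    exact hW ▸ hC.nextFresh_add_notMem i

theorem Admissible.step_expand {f : F} {a n₁ n₂ : AUE F} {R : Set (AUE F)}
    (hC : Admissible C) (hW : C.aues = insert a R) (hW' : C'.aues = {n₁, n₂} ∪ R)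
    (hθ : C'.θ = compOne C.θ a.lab (.app f [.var n₁.lab, .var n₂.lab]))
    (h₁ : n₁.lab = nextFresh C) (h₂ : n₂.lab = n₁.lab + 1)
    (hl : AbsEq Th (.app f [n₁.lhs, n₂.lhs]) a.lhs)
    (hr : AbsEq Th (.app f [n₁.rhs, n₂.rhs]) a.rhs) :
    Admissible C' ∧ PreservesGen Th C C' := by
  have hR : R.Finite := hC.finite.subset (hW ▸ Set.subset_insert a R)
  refine hC.step_of_soundBinding (hW' ▸ (Set.toFinite _).union hR) hθ ?_
  have hfresh := hC.nextFresh_add_notMem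
  rw [hW] at hfresh
  rw [hW, hW']
  exact .expand (hW ▸ hC.valid) (h₁ ▸ hfresh 0) (h₂ ▸ h₁ ▸ hfresh 1) (by omega) hl hr

theorem Admissible.step_merge {s t : Tm F} {x y : ℕ} (hC : Admissible C)
    (hW : C.aues = insert ⟨s, x, t⟩ C'.aues) (hy : ⟨s, y, t⟩ ∈ C'.aues)
    (hθ : C'.θ = compOne C.θ x (.var y)) :
    Admissible C' ∧ PreservesGen Th C C' := by
  refine hC.step_of_soundBinding (hC.finite.subset (hW ▸ Set.subset_insert _ _)) hθ ?_
  rw [hW]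
  exact .merge (hW ▸ hC.valid) hy

theorem Step.admissible_preservesGen (h : Step Th C C') (hC : Admissible C) :
    Admissible C' ∧ PreservesGen Th C C' := by
  cases h with
  | dec f ss ts x ys A S T θ hlen _ hys =>
    exact hC.step_decompose (R := A ∪ S ∪ T) (by simp only [Config.aues, Set.insert_union])
      (by simp only [Config.aues, Set.union_assoc]) rfl hlen hys
  | sol a A S T θ =>
    have hW : Config.aues ⟨A, insert a S, T, θ⟩ = Config.aues ⟨insert a A, S, T, θ⟩ := by
      simp only [Config.aues, Set.insert_union, Set.union_insert]
    refine ⟨⟨hW ▸ hC.finite, hC.finDom, hW ▸ hC.valid⟩, fun z s t h => ?_⟩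
    rw [hW]
    exact h
  | expLA1 f e t1 t2 x y1 y2 A S T θ hp _ hy1 hy2 =>
    exact hC.step_expand (R := A ∪ S ∪ T) (n₁ := ⟨.app e [], y1, t1⟩)
      (n₂ := ⟨starTm Sg, y2, t2⟩) (by simp only [Config.aues, Set.insert_union]; rfl)
      (by ext; simp [Config.aues]; tauto) rfl hy1 hy2 (.absL _ hp) (.refl _)
  | expLA2 f e t1 t2 x y1 y2 A S T θ hp _ hy1 hy2 =>
    exact hC.step_expand (R := A ∪ S ∪ T) (n₁ := ⟨starTm Sg, y1, t1⟩)
      (n₂ := ⟨.app e [], y2, t2⟩) (by simp only [Config.aues, Set.insert_union]; rfl)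
      (by ext; simp [Config.aues]; tauto) rfl hy1 hy2 (.absR _ hp) (.refl _)
  | expRA1 f e s1 s2 x y1 y2 A S T θ hp _ hy1 hy2 =>
    exact hC.step_expand (R := A ∪ S ∪ T) (n₁ := ⟨s1, y1, .app e []⟩)
      (n₂ := ⟨s2, y2, starTm Sg⟩) (by simp only [Config.aues, Set.insert_union]; rfl)
      (by ext; simp [Config.aues]; tauto) rfl hy1 hy2 (.refl _) (.absL _ hp)
  | expRA2 f e s1 s2 x y1 y2 A S T θ hp _ hy1 hy2 =>
    exact hC.step_expand (R := A ∪ S ∪ T) (n₁ := ⟨s1, y1, starTm Sg⟩)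
      (n₂ := ⟨s2, y2, .app e []⟩) (by simp only [Config.aues, Set.insert_union]; rfl)
      (by ext; simp [Config.aues]; tauto) rfl hy1 hy2 (.refl _) (.absR _ hp)
  | mer s t x y S T θ =>
    exact hC.step_merge (by simp only [Config.aues, Set.union_insert, Set.insert_union]; rfl)
      (by simp [Config.aues]) rfl

theorem Admissible.preservesGen_of_reflTransGen (hC : Admissible C)
    (h : Relation.ReflTransGen (Step Th) C C') : Admissible C' ∧ PreservesGen Th C C' := by
  induction h with
  | refl => exact ⟨hC, fun _ _ _ => id⟩
  | tail _ hstep ih =>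
    obtain ⟨hC', hpres⟩ := hstep.admissible_preservesGen ih.1
    exact ⟨hC', fun z s t h => hpres z s t (ih.2 z s t h)⟩

end Derivations

theorem aunif_soundness_general {F : Type} {Sg : AbsSig F} (Th : AbsTh Sg)
    (C0 Cn : Config F) (h0 : IsConfig Th C0)
    (hder : Relation.ReflTransGen (Step Th) C0 Cn)
    (hAn : Cn.A = ∅)
    (a : AUE F) (ha : a ∈ C0.A ∪ C0.S ∪ C0.T) :
    Gen Th (Cn.θ a.lab) a.lhs a.rhs ∧
    AbsEq Th ((Cn.θ a.lab).subst (sigmaW (Cn.S ∪ Cn.T))) a.lhs ∧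
    AbsEq Th ((Cn.θ a.lab).subst (rhoW (Cn.S ∪ Cn.T))) a.rhs := by
  have hC0 := h0.admissible
  have hθ0 : C0.θ a.lab = .var a.lab := by
    by_contra hdom
    rcases ha with (ha | ha) | ha
    exacts [Set.disjoint_left.mp h0.disjAD (mem_labels ha) hdom,
      Set.disjoint_left.mp h0.disjSD (mem_labels ha) hdom,
      Set.disjoint_left.mp h0.disjTD (mem_labels ha) hdom]
  have hgen0 : GenVia Th C0.aues (C0.θ a.lab) a.lhs a.rhs :=
    hθ0 ▸ GenVia.var_lab hC0.valid ha
  obtain ⟨hCn, hpres⟩ := hC0.preservesGen_of_reflTransGen hder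
  have hgen := hpres a.lab a.lhs a.rhs hgen0
  have hWn : Cn.aues = Cn.S ∪ Cn.T := by rw [Config.aues, hAn, Set.empty_union]
  rw [hWn] at hgen
  exact ⟨hgen.gen (hWn ▸ hCn.finite), hgen.lhs, hgen.rhs⟩

/-- Soundness, Theorem 2: if `⟨A₀;S₀;T₀;θ₀⟩ ⟹* ⟨∅;Sₙ;Tₙ;θₙ⟩`
is a derivation to a final configuration, then for every AUE `s ≜_x t` in
`A₀ ∪ S₀ ∪ Tₙ₀`, the term `xθₙ` is an `Abs`-generalization of `s` and `t`;
more precisely `xθₙσ_D ≈_Abs s` and `xθₙρ_D ≈_Abs t`, where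
`σ_D = σ_{Sₙ ∪ Tₙ}` and `ρ_D = ρ_{Sₙ ∪ Tₙ}`. -/
theorem aunif_soundness {F : Type} {Sg : AbsSig F} (Th : AbsTh Sg)
    (C0 Cn : Config F) (h0 : IsConfig Th C0)
    (hder : Relation.ReflTransGen (Step Th) C0 Cn)
    (hAn : Cn.A = ∅) (hfin : Final Th Cn)
    (a : AUE F) (ha : a ∈ C0.A ∪ C0.S ∪ C0.T) :
    Gen Th (Cn.θ a.lab) a.lhs a.rhs ∧
    AbsEq Th ((Cn.θ a.lab).subst (sigmaW (Cn.S ∪ Cn.T))) a.lhs ∧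
    AbsEq Th ((Cn.θ a.lab).subst (rhoW (Cn.S ∪ Cn.T))) a.rhs :=
  aunif_soundness_general Th C0 Cn h0 hder hAn a ha

end AbsAU
end

section
/- Let the signature contain an absorption pair (f, ε_f) and pairwise distinct constants a, b, c, none of which is ε_f, and let x be a variable. Then the three-element set {f(f(x,c),a), f(f(b,x),a), f(f(b,c),x)} is a minimal complete set of Abs-generalizations of ε_f and f(f(b,c),a). -/
/- Common development: first-order terms, absorption theories, anti-unification
   equations, configurations and the AUnif transformation rules. -/

namespace AbsAU

variable {F : Type}

/-! Equality modulo `Abs` is decided by the normal form `nf`, which absorbs bottom-up. Let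
`r σ ≈ ε_f` and `r τ ≈ f(f(b,c),a)`. Normalizing `r τ` forces `r` to follow the shape of
`f(f(b,c),a)` until it reaches a variable, and the branch along which `r σ` collapses to `ε_f`
must end in a variable `z` whose `τ`-image normalizes to `a`, `b`, `c` or `f(b,c)`. Only variables
whose image normalizes to a subterm of the target contribute to `r τ`, so rebinding `z` to `x`
(or to `f(x,c)`) leaves the rest intact and exhibits `r` as more general than one of the three
terms. Minimality holds because in each pair one term has a constant where the other has `x`. -/

section Terms

variable {F : Type}

theorem Tm.mem_induction {P : Tm F → Prop} (var : ∀ x, P (.var x))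
    (app : ∀ g ts, (∀ t ∈ ts, P t) → P (.app g ts)) : ∀ t, P t
  | .var x => var x
  | .app g ts => app g ts fun t _ => Tm.mem_induction var app t
decreasing_by
  have := List.sizeOf_lt_of_mem ‹t ∈ ts›
  simp only [Tm.app.sizeOf_spec]
  omega

@[simp]
theorem Tm.subst_var_s12 (σ : ℕ → Tm F) (z : ℕ) : (Tm.var z).subst σ = σ z := by
  rw [Tm.subst]

@[simp]
theorem Tm.subst_app_s12 (σ : ℕ → Tm F) (g : F) (ts : List (Tm F)) :
    (Tm.app g ts).subst σ = .app g (ts.map (Tm.subst σ)) := by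
  rw [Tm.subst]
  simp

theorem finDom_var : FinDom (Tm.var : ℕ → Tm F) := by
  simp [FinDom, Dom]

theorem FinDom.update {τ : ℕ → Tm F} (hτ : FinDom τ) (z : ℕ) (w : Tm F) :
    FinDom (Function.update τ z w) := by
  refine (hτ.insert z).subset fun y hy => ?_
  by_cases hyz : y = z
  · exact Or.inl hyz
  · exact Or.inr (by simpa [Dom, Function.update_of_ne hyz] using hy)

theorem moreGen_var {Sg : AbsSig F} (Th : AbsTh Sg) (z : ℕ) (t : Tm F) :
    MoreGen Th (.var z) t :=
  ⟨Function.update .var z t, finDom_var.update z t, by simpa using AbsEq.refl t⟩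

inductive Subterm : Tm F → Tm F → Prop where
  | refl (t : Tm F) : Subterm t t
  | arg {u t : Tm F} (g : F) {ts : List (Tm F)} :
      t ∈ ts → Subterm u t → Subterm u (.app g ts)

theorem subterm_app_iff {u : Tm F} {g : F} {ts : List (Tm F)} :
    Subterm u (.app g ts) ↔ u = .app g ts ∨ ∃ t ∈ ts, Subterm u t := by
  constructor
  · rintro (_ | ⟨_, ht, hu⟩)
    exacts [Or.inl rfl, Or.inr ⟨_, ht, hu⟩]
  · rintro (rfl | ⟨t, ht, hu⟩)
    exacts [.refl _, .arg g ht hu]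

end Terms

section Absorption

variable {F : Type} {Sg : AbsSig F} {Th : AbsTh Sg}

theorem AbsTh.partner_unique {f e e' : F} (h : (f, e) ∈ Th.pairs)
    (h' : (f, e') ∈ Th.pairs) : e = e' := by
  by_contra hne
  exact (Th.distinct _ h _ h' (by simp [hne])).1 rfl

theorem AbsTh.mem_pairs_iff_of_mem {f e e' : F} (hfe : (f, e) ∈ Th.pairs) :
    (f, e') ∈ Th.pairs ↔ e' = e :=
  ⟨fun h => Th.partner_unique h hfe, fun h => h ▸ hfe⟩

theorem AbsEq.congr₂ {g : F} {s₁ s₂ t₁ t₂ : Tm F} (h₁ : AbsEq Th s₁ t₁)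
    (h₂ : AbsEq Th s₂ t₂) : AbsEq Th (.app g [s₁, s₂]) (.app g [t₁, t₂]) :=
  .congr g (.cons h₁ (.cons h₂ .nil))

variable (Th)

open Classical in
noncomputable def absorbApp (g : F) (l : List (Tm F)) : Tm F :=
  if h : ∃ e, (g, e) ∈ Th.pairs ∧ l.length = 2 ∧ .app e [] ∈ l then .app h.choose []
  else .app g l

noncomputable def nf : Tm F → Tm F
  | .var x => .var x
  | .app g ts => absorbApp Th g (ts.attach.map fun t => nf t.1)
decreasing_by
  have := List.sizeOf_lt_of_mem t.2
  simp only [Tm.app.sizeOf_spec]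
  omega

variable {Th}

theorem absorbApp_of_mem {g e : F} {l : List (Tm F)} (hp : (g, e) ∈ Th.pairs)
    (hl : l.length = 2) (he : .app e [] ∈ l) : absorbApp Th g l = .app e [] := by
  have h : ∃ e, (g, e) ∈ Th.pairs ∧ l.length = 2 ∧ .app e [] ∈ l := ⟨e, hp, hl, he⟩
  rw [absorbApp, dif_pos h, Th.partner_unique h.choose_spec.1 hp]

theorem absorbApp_of_forall_not_mem {g : F} {l : List (Tm F)}
    (h : ∀ e, (g, e) ∈ Th.pairs → l.length = 2 → .app e [] ∉ l) :
    absorbApp Th g l = .app g l := by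
  rw [absorbApp, dif_neg]
  rintro ⟨e, hp, hl, he⟩
  exact h e hp hl he

theorem absorbApp_cases (Th : AbsTh Sg) (g : F) (l : List (Tm F)) :
    absorbApp Th g l = .app g l ∨ ∃ e, (g, e) ∈ Th.pairs ∧ l.length = 2 ∧ .app e [] ∈ l ∧
      absorbApp Th g l = .app e [] := by
  by_cases h : ∃ e, (g, e) ∈ Th.pairs ∧ l.length = 2 ∧ .app e [] ∈ l
  · obtain ⟨e, hp, hl, he⟩ := h
    exact Or.inr ⟨e, hp, hl, he, absorbApp_of_mem hp hl he⟩
  · exact Or.inl (absorbApp_of_forall_not_mem fun e hp hl he => h ⟨e, hp, hl, he⟩)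

@[simp]
theorem nf_var (x : ℕ) : nf Th (.var x) = .var x := by
  rw [nf]

theorem nf_app (Th : AbsTh Sg) (g : F) (ts : List (Tm F)) :
    nf Th (.app g ts) = absorbApp Th g (ts.map (nf Th)) := by
  rw [nf]
  simp

@[simp]
theorem nf_const (k : F) : nf Th (.app k []) = .app k [] := by
  rw [nf_app, absorbApp_of_forall_not_mem] <;> simp

theorem nf_app_cases (Th : AbsTh Sg) (g : F) (ts : List (Tm F)) :
    nf Th (.app g ts) = .app g (ts.map (nf Th)) ∨
      ∃ e u v, (g, e) ∈ Th.pairs ∧ ts = [u, v] ∧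
        (nf Th u = .app e [] ∨ nf Th v = .app e []) ∧ nf Th (.app g ts) = .app e [] := by
  rw [nf_app]
  refine (absorbApp_cases Th g _).imp id ?_
  rintro ⟨e, hp, hl, he, habs⟩
  obtain ⟨u, v, rfl⟩ := List.length_eq_two.mp (by simpa using hl)
  refine ⟨e, u, v, hp, rfl, ?_, habs⟩
  simp only [List.map_cons, List.map_nil, List.mem_cons, List.not_mem_nil, or_false] at he
  exact he.imp Eq.symm Eq.symm

end Absorption

section NormalForm

variable {F : Type} {Sg : AbsSig F} {Th : AbsTh Sg}

theorem nf_eq_of_absEq {s t : Tm F} (h : AbsEq Th s t) : nf Th s = nf Th t := by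
  refine AbsEq.rec (motive_1 := fun s t _ => nf Th s = nf Th t)
    (motive_2 := fun ss ts _ => ss.map (nf Th) = ts.map (nf Th)) ?_ ?_ ?_ ?_ ?_ ?_ ?_ ?_ h
  · intro f e t hp
    rw [nf_app, absorbApp_of_mem hp (by simp) (by simp), nf_const]
  · intro f e t hp
    rw [nf_app, absorbApp_of_mem hp (by simp) (by simp), nf_const]
  · exact fun _ => rfl
  · exact fun _ ih => ih.symm
  · exact fun _ _ ih₁ ih₂ => ih₁.trans ih₂
  · intro g ss ts _ ih
    rw [nf_app, nf_app, ih]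
  · rfl
  · intro s t ss ts _ _ ih ihs
    simp [ih, ihs]

theorem absEq_nf : ∀ t : Tm F, AbsEq Th t (nf Th t) := by
  refine Tm.mem_induction (fun x => by simpa using .refl _) fun g ts ih => ?_
  have hargs : AbsEq Th (.app g ts) (.app g (ts.map (nf Th))) :=
    .congr g (List.forall₂_map_right_iff.mpr (List.forall₂_same.mpr ih))
  rcases nf_app_cases Th g ts with hnf | ⟨e, u, v, hp, rfl, hu | hv, hnf⟩
  · rwa [hnf]
  · rw [hnf]
    exact hargs.trans (by simpa [hu] using AbsEq.absL _ hp)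
  · rw [hnf]
    exact hargs.trans (by simpa [hv] using AbsEq.absR _ hp)

theorem absEq_subst_of_relevant {τ δ : ℕ → Tm F} : ∀ s : Tm F,
    (∀ z, VarIn z s → Subterm (nf Th (τ z)) (nf Th (s.subst τ)) →
      AbsEq Th (δ z) (τ z)) → AbsEq Th (s.subst δ) (s.subst τ) := by
  refine Tm.mem_induction (fun x h => by simpa using h x (.var x) (by simpa using .refl _)) ?_
  intro g ts ih h
  simp only [Tm.subst_app_s12]
  rcases nf_app_cases Th g (ts.map (Tm.subst τ)) with hnf | ⟨e, p, q, hp, hts, hpq, hnf⟩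
  · refine .congr g (List.forall₂_map_left_iff.mpr (List.forall₂_map_right_iff.mpr
      (List.forall₂_same.mpr fun t ht => ih t ht fun z hz hsub => h z (.app g ht hz) ?_)))
    rw [Tm.subst_app_s12, hnf]
    exact .arg g (by simp only [List.map_map, List.mem_map]; exact ⟨t, ht, rfl⟩) hsub
  obtain ⟨u, v, rfl⟩ : ∃ u v, ts = [u, v] :=
    List.length_eq_two.mp (by simpa using congrArg List.length hts)
  simp only [List.map_cons, List.map_nil, List.cons.injEq, and_true] at hts hnf
  obtain ⟨rfl, rfl⟩ := hts
  have habs : AbsEq Th (.app g [u.subst τ, v.subst τ]) (.app e []) := hnf ▸ absEq_nf _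
  have ih' : ∀ t ∈ [u, v], nf Th (t.subst τ) = .app e [] →
      AbsEq Th (t.subst δ) (.app e []) :=
    fun t ht het => (ih t ht fun z hz hsub =>
      h z (.app g ht hz) (by simpa [hnf, het] using hsub)).trans (het ▸ absEq_nf _)
  simp only [List.map_cons, List.map_nil]
  rcases hpq with hu | hv
  · exact (((ih' u (by simp) hu).congr₂ (.refl _)).trans (.absL _ hp)).trans habs.symm
  · exact (((AbsEq.refl _).congr₂ (ih' v (by simp) hv)).trans (.absR _ hp)).trans habs.symm

theorem absEq_subst_update_of_not_subterm {τ : ℕ → Tm F} {s t : Tm F} {z : ℕ} (w : Tm F)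
    (hs : nf Th (s.subst τ) = t) (hz : ¬ Subterm (nf Th (τ z)) t) :
    AbsEq Th (s.subst (Function.update τ z w)) t := by
  refine (absEq_subst_of_relevant s fun y _ hy => ?_).trans (hs ▸ absEq_nf _)
  by_cases hyz : y = z
  · subst hyz
    exact absurd (hs ▸ hy) hz
  · simpa [Function.update_of_ne hyz] using .refl _

theorem nf_app_eq_app {g g' : F} {ts ws : List (Tm F)} (h : nf Th (.app g ts) = .app g' ws)
    (hws : ws ≠ []) : g = g' ∧ ts.map (nf Th) = ws := by
  rcases nf_app_cases Th g ts with hnf | ⟨e, -, -, -, -, -, hnf⟩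
  · simpa [hnf] using h
  · simp [hnf] at h
    exact absurd h.2 hws

theorem nf_app_eq_const {g k : F} {ts : List (Tm F)} (h : nf Th (.app g ts) = .app k []) :
    (g = k ∧ ts = []) ∨ ((g, k) ∈ Th.pairs ∧ ts.length = 2) := by
  rcases nf_app_cases Th g ts with hnf | ⟨e, u, v, hp, rfl, -, hnf⟩
  · simp_all
  · simp_all

theorem nf_app₂_eq_absorber {f e : F} (hfe : (f, e) ∈ Th.pairs) {u v : Tm F}
    (h : nf Th (.app f [u, v]) = .app e []) : nf Th u = .app e [] ∨ nf Th v = .app e [] := by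
  rcases nf_app_cases Th f [u, v] with hnf | ⟨e', u', v', hp, huv, hu, hnf⟩
  · simp [hnf] at h
  · simp only [List.cons.injEq, and_true] at huv
    obtain ⟨rfl, rfl⟩ := huv
    rwa [Th.partner_unique hfe hp]

theorem exists_eq_var_of_nf_subst_eq_const {s : Tm F} {σ τ : ℕ → Tm F} {k k' : F}
    (hk : k ≠ k')
    (hσ : nf Th (s.subst σ) = .app k []) (hτ : nf Th (s.subst τ) = .app k' []) :
    ∃ z, s = .var z := by
  cases s with
  | var z => exact ⟨z, rfl⟩
  | app g ts =>
    rw [Tm.subst_app_s12] at hσ hτ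
    refine absurd ?_ hk
    rcases nf_app_eq_const hσ with ⟨rfl, hts⟩ | ⟨hp, hl⟩ <;>
      rcases nf_app_eq_const hτ with ⟨rfl, hts'⟩ | ⟨hp', hl'⟩
    · rfl
    · simp [List.map_eq_nil_iff.mp hts] at hl'
    · simp [List.map_eq_nil_iff.mp hts'] at hl
    · exact Th.partner_unique hp hp'

theorem eq_var_or_eq_app₂_of_nf_subst {s : Tm F} {τ : ℕ → Tm F} {g : F} {w₁ w₂ : Tm F}
    (h : nf Th (s.subst τ) = .app g [w₁, w₂]) :
    (∃ z, s = .var z) ∨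
      ∃ u v, s = .app g [u, v] ∧ nf Th (u.subst τ) = w₁ ∧ nf Th (v.subst τ) = w₂ := by
  cases s with
  | var z => exact Or.inl ⟨z, rfl⟩
  | app g' ts =>
    rw [Tm.subst_app_s12] at h
    obtain ⟨rfl, hts⟩ := nf_app_eq_app h (by simp)
    obtain ⟨u, v, rfl⟩ : ∃ u v, ts = [u, v] :=
      List.length_eq_two.mp (by simpa using congrArg List.length hts)
    simp only [List.map_cons, List.map_nil, List.cons.injEq, and_true] at hts
    exact Or.inr ⟨u, v, rfl, hts⟩

theorem nf_app_eq_app_iff {g : F} {ts ws : List (Tm F)} (hws : ws ≠ []) :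
    nf Th (.app g ts) = .app g ws ↔
      ts.map (nf Th) = ws ∧ ∀ e, (g, e) ∈ Th.pairs → ws.length = 2 → .app e [] ∉ ws := by
  refine ⟨fun h => ?_, fun ⟨hts, hws'⟩ => ?_⟩
  · have hts := (nf_app_eq_app h hws).2
    refine ⟨hts, fun e hp hl he => ?_⟩
    rw [nf_app, hts, absorbApp_of_mem hp hl he, Tm.app.injEq] at h
    exact hws h.2.symm
  · rw [nf_app, hts, absorbApp_of_forall_not_mem hws']

end NormalForm

section Example

open Tm

variable {F : Type} {Sg : AbsSig F} {Th : AbsTh Sg} {f e a b c : F}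

def exampleGens (f a b c : F) (x : ℕ) : Set (Tm F) :=
  {app f [app f [var x, app c []], app a []], app f [app f [app b [], var x], app a []],
    app f [app f [app b [], app c []], var x]}

theorem exampleGens_subset_gAbs (hfe : (f, e) ∈ Th.pairs) (x : ℕ) :
    exampleGens f a b c x ⊆
      GAbs Th (app e []) (app f [app f [app b [], app c []], app a []]) := by
  have hinst : ∀ r t w, AbsEq Th (r.subst (Function.update var x w)) t → MoreGen Th r t :=
    fun _ _ w h => ⟨_, finDom_var.update x w, h⟩
  rintro r (rfl | rfl | rfl)
  · refine ⟨hinst _ _ (app e []) ?_, hinst _ _ (app b []) (by simpa using .refl _)⟩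
    simpa using ((AbsEq.absL _ hfe).congr₂ (.refl _)).trans (.absL _ hfe)
  · refine ⟨hinst _ _ (app e []) ?_, hinst _ _ (app c []) (by simpa using .refl _)⟩
    simpa using ((AbsEq.absR _ hfe).congr₂ (.refl _)).trans (.absL _ hfe)
  · exact ⟨hinst _ _ (app e []) (by simpa using .absR _ hfe),
      hinst _ _ (app a []) (by simpa using .refl _)⟩

theorem moreGen_of_absorbing_left (hfe : (f, e) ∈ Th.pairs) (hab : a ≠ b) (hac : a ≠ c)
    (hbc : b ≠ c) (hbe : b ≠ e) (hce : c ≠ e) (x : ℕ) {r₁ r₂ : Tm F}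
    {σ τ : ℕ → Tm F} (hτ : FinDom τ) (h₁σ : nf Th (r₁.subst σ) = app e [])
    (h₁τ : nf Th (r₁.subst τ) = app f [app b [], app c []])
    (h₂τ : nf Th (r₂.subst τ) = app a []) :
    MoreGen Th (app f [r₁, r₂]) (app f [app f [var x, app c []], app a []]) ∨
      MoreGen Th (app f [r₁, r₂]) (app f [app f [app b [], var x], app a []]) := by
  rcases eq_var_or_eq_app₂_of_nf_subst h₁τ with ⟨z, rfl⟩ | ⟨u, v, rfl, huτ, hvτ⟩
  · refine Or.inl ⟨Function.update τ z (app f [var x, app c []]), hτ.update _ _, ?_⟩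
    simp only [subst_app_s12, List.map_cons, List.map_nil, subst_var_s12, Function.update_self]
    refine (AbsEq.refl _).congr₂ (absEq_subst_update_of_not_subterm _ h₂τ ?_)
    simp_all [subterm_app_iff]
  simp only [subst_app_s12, List.map_cons, List.map_nil] at h₁σ
  rcases nf_app₂_eq_absorber hfe h₁σ with huσ | hvσ
  · obtain ⟨z, rfl⟩ := exists_eq_var_of_nf_subst_eq_const hbe.symm huσ huτ
    refine Or.inl ⟨Function.update τ z (var x), hτ.update _ _, ?_⟩
    simp only [subst_app_s12, List.map_cons, List.map_nil, subst_var_s12, Function.update_self]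
    refine ((AbsEq.refl _).congr₂ (absEq_subst_update_of_not_subterm _ hvτ ?_)).congr₂
      (absEq_subst_update_of_not_subterm _ h₂τ ?_) <;> simp_all [subterm_app_iff, Ne.symm]
  · obtain ⟨z, rfl⟩ := exists_eq_var_of_nf_subst_eq_const hce.symm hvσ hvτ
    refine Or.inr ⟨Function.update τ z (var x), hτ.update _ _, ?_⟩
    simp only [subst_app_s12, List.map_cons, List.map_nil, subst_var_s12, Function.update_self]
    refine ((absEq_subst_update_of_not_subterm _ huτ ?_).congr₂ (.refl _)).congr₂
      (absEq_subst_update_of_not_subterm _ h₂τ ?_) <;> simp_all [subterm_app_iff, Ne.symm]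

theorem moreGen_of_absorbing_right (hab : a ≠ b) (hac : a ≠ c) (hae : a ≠ e) (x : ℕ)
    {r₁ r₂ : Tm F} {σ τ : ℕ → Tm F} (hτ : FinDom τ)
    (h₁τ : nf Th (r₁.subst τ) = app f [app b [], app c []])
    (h₂σ : nf Th (r₂.subst σ) = app e []) (h₂τ : nf Th (r₂.subst τ) = app a []) :
    MoreGen Th (app f [r₁, r₂]) (app f [app f [app b [], app c []], var x]) := by
  obtain ⟨z, rfl⟩ := exists_eq_var_of_nf_subst_eq_const hae.symm h₂σ h₂τ
  refine ⟨Function.update τ z (var x), hτ.update _ _, ?_⟩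
  simp only [subst_app_s12, List.map_cons, List.map_nil, subst_var_s12, Function.update_self]
  refine (absEq_subst_update_of_not_subterm _ h₁τ ?_).congr₂ (.refl _)
  simp_all [subterm_app_iff]

theorem exists_moreGen_exampleGens_of_mem_gAbs (hfe : (f, e) ∈ Th.pairs) (hab : a ≠ b)
    (hac : a ≠ c) (hbc : b ≠ c) (hae : a ≠ e) (hbe : b ≠ e) (hce : c ≠ e) (x : ℕ)
    {r : Tm F}
    (hr : r ∈ GAbs Th (app e []) (app f [app f [app b [], app c []], app a []])) :
    ∃ r' ∈ exampleGens f a b c x, MoreGen Th r r' := by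
  obtain ⟨⟨σ, -, hσ⟩, τ, hτ, hτt⟩ := hr
  have hσ' : nf Th (r.subst σ) = app e [] := by simpa using nf_eq_of_absEq hσ
  have hτ' : nf Th (r.subst τ) = app f [app f [app b [], app c []], app a []] := by
    rw [nf_eq_of_absEq hτt]
    simp [nf_app_eq_app_iff, Th.mem_pairs_iff_of_mem hfe, hae.symm, hbe.symm, hce.symm]
  rcases eq_var_or_eq_app₂_of_nf_subst hτ' with ⟨z, rfl⟩ | ⟨r₁, r₂, rfl, h₁τ, h₂τ⟩
  · exact ⟨app f [app f [app b [], app c []], var x], by simp [exampleGens], moreGen_var Th z _⟩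
  simp only [subst_app_s12, List.map_cons, List.map_nil] at hσ'
  rcases nf_app₂_eq_absorber hfe hσ' with h₁σ | h₂σ
  · rcases moreGen_of_absorbing_left hfe hab hac hbc hbe hce x hτ h₁σ h₁τ h₂τ with h | h
    exacts [⟨_, by simp [exampleGens], h⟩, ⟨_, by simp [exampleGens], h⟩]
  · exact ⟨_, by simp [exampleGens],
      moreGen_of_absorbing_right hab hac hae x hτ h₁τ h₂σ h₂τ⟩

theorem eq_of_moreGen_of_mem_exampleGens (hfe : (f, e) ∈ Th.pairs) (hae : a ≠ e)
    (hbe : b ≠ e) (hce : c ≠ e) (x : ℕ) {r r' : Tm F} (hr : r ∈ exampleGens f a b c x)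
    (hr' : r' ∈ exampleGens f a b c x) (h : MoreGen Th r r') : r = r' := by
  obtain ⟨δ, -, hδ⟩ := h
  have hnf : nf Th r' = r' := by
    rcases hr' with rfl | rfl | rfl <;>
      simp [nf_app_eq_app_iff, Th.mem_pairs_iff_of_mem hfe, hae.symm, hbe.symm, hce.symm]
  have hδ' := (nf_eq_of_absEq hδ).trans hnf
  rcases hr with rfl | rfl | rfl <;> rcases hr' with rfl | rfl | rfl <;>
    first | rfl | simp [nf_app_eq_app_iff] at hδ'

end Example

theorem mcsg_example_general {F : Type} {Sg : AbsSig F} (Th : AbsTh Sg)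
    (f e a b c : F) (x : ℕ)
    (hfe : (f, e) ∈ Th.pairs)
    (hab : a ≠ b) (hac : a ≠ c) (hbc : b ≠ c)
    (hae : a ≠ e) (hbe : b ≠ e) (hce : c ≠ e) :
    IsMCSG Th
      ({Tm.app f [Tm.app f [Tm.var x, Tm.app c []], Tm.app a []],
        Tm.app f [Tm.app f [Tm.app b [], Tm.var x], Tm.app a []],
        Tm.app f [Tm.app f [Tm.app b [], Tm.app c []], Tm.var x]} : Set (Tm F))
      (Tm.app e [])
      (Tm.app f [Tm.app f [Tm.app b [], Tm.app c []], Tm.app a []]) :=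
  ⟨exampleGens_subset_gAbs hfe x,
    fun _ hr => exists_moreGen_exampleGens_of_mem_gAbs hfe hab hac hbc hae hbe hce x hr,
    fun _ hr _ hr' => eq_of_moreGen_of_mem_exampleGens hfe hae hbe hce x hr hr'⟩

/-- Example 2: for an absorption pair `(f, ε_f)` and pairwise
distinct ordinary constants `a`, `b`, `c` different from `ε_f`, the set
`{f(f(x,c),a), f(f(b,x),a), f(f(b,c),x)}` is a minimal complete set of
`Abs`-generalizations of `ε_f` and `f(f(b,c),a)`. -/
theorem mcsg_example {F : Type} {Sg : AbsSig F} (Th : AbsTh Sg)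
    (f e a b c : F) (x : ℕ)
    (hfe : (f, e) ∈ Th.pairs)
    (ha : Sg.arity a = 0) (hb : Sg.arity b = 0) (hc : Sg.arity c = 0)
    (hab : a ≠ b) (hac : a ≠ c) (hbc : b ≠ c)
    (hae : a ≠ e) (hbe : b ≠ e) (hce : c ≠ e) :
    IsMCSG Th
      ({Tm.app f [Tm.app f [Tm.var x, Tm.app c []], Tm.app a []],
        Tm.app f [Tm.app f [Tm.app b [], Tm.var x], Tm.app a []],
        Tm.app f [Tm.app f [Tm.app b [], Tm.app c []], Tm.var x]} : Set (Tm F))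
      (Tm.app e [])
      (Tm.app f [Tm.app f [Tm.app b [], Tm.app c []], Tm.app a []]) :=
  mcsg_example_general Th f e a b c x hfe hab hac hbc hae hbe hce

end AbsAU
end
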